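/- Let k ≥ 1, d ≥ 4, and n ≥ k(d-1)+2 be integers. Let T = T₁ ∨ T₂ ∨ ⋯ ∨ T_{d+1} be the sequential join with T₁ = T_{d+1} = K₁ and T₂ = ⋯ = T_d = K_k, and let G be the graph obtained from T by adding a clique R on n - (kd-k+2) new vertices and joining every vertex of R to every vertex of T₂ ∪ T₃ ∪ T₄. Then G is a simple k-connected graph of order n and diameter d with exactly ((3d-5)k² + (5-d)k)/2 + C(n-kd+k-2, 2) + 3k(n-kd+k-2) edges. -/

import Mathlib

/-- A graph is `k`-connected if it has more than `k` vertices and remains connected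
whenever fewer than `k` vertices are deleted. -/
def SimpleGraph.KConnected {V : Type*} [Fintype V] (k : ℕ) (G : SimpleGraph V) : Prop :=
  k < Fintype.card V ∧ ∀ S : Set V, S.ncard < k → (G.induce Sᶜ).Connected

/-- The level of a vertex `v < k*(d-1)+2` in the sequential join
`T = T₁ ∨ T₂ ∨ ⋯ ∨ T_{d+1}` with `T₁ = T_{d+1} = K₁` and `T₂ = ⋯ = T_d = K_k`:
vertex `0` is the vertex of `T₁` (level `0`), vertices `1, …, k*(d-1)` form the middle
copies of `K_k` (levels `1, …, d-1`, `k` vertices each), and vertex `k*(d-1)+1` is the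
vertex of `T_{d+1}` (level `d`). -/
def oreLevel (k d v : ℕ) : ℕ :=
  if v = 0 then 0 else if v ≤ k * (d - 1) then (v - 1) / k + 1 else d

/-- The extremal graph for Ore's theorem when `d ≥ 4`: the first `k*(d-1)+2` vertices form
the sequential join `T = K₁ ∨ K_k ∨ ⋯ ∨ K_k ∨ K₁` (two distinct vertices of `T` are adjacent
iff their levels differ by at most `1`), the remaining `n - (k*(d-1)+2)` vertices form a
clique `R`, and every vertex of `R` is joined to every vertex of `T₂ ∪ T₃ ∪ T₄`
(the vertices of `T` of levels `1`, `2` and `3`). -/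
def oreExtremalGraph (k d n : ℕ) : SimpleGraph (Fin n) :=
  SimpleGraph.fromRel fun v w =>
    (v.val < k * (d - 1) + 2 ∧ w.val < k * (d - 1) + 2 ∧
      oreLevel k d v.val ≤ oreLevel k d w.val + 1 ∧
      oreLevel k d w.val ≤ oreLevel k d v.val + 1)
    ∨ (k * (d - 1) + 2 ≤ v.val ∧ k * (d - 1) + 2 ≤ w.val)
    ∨ (k * (d - 1) + 2 ≤ v.val ∧ w.val < k * (d - 1) + 2 ∧
        1 ≤ oreLevel k d w.val ∧ oreLevel k d w.val ≤ 3)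

/-!
The vertices of `R` are adjacent exactly to each other and to the levels `1`, `2`, `3` of `T`,
just like the vertices of level `2`. Merging `R` into that level exhibits the graph as the
sequential join `K₁ ∨ K_k ∨ K_{k+r} ∨ K_k ∨ ⋯ ∨ K_k ∨ K₁` of `d + 1` cliques, where
`r = n - (k(d-1)+2)`. In a sequential join the level changes by at most one along an edge, so the
two end vertices are at distance `d`, while consecutive levels give paths of length at most `d`
between any two vertices. Deleting fewer than `k` vertices leaves every inner level nonempty,
which keeps the join connected. The edges are counted level by level via the handshake lemma.
-/

open Finset

namespace SimpleGraph

variable {V : Type*}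

/-- The sequential join `K_{ℓ⁻¹ 0} ∨ K_{ℓ⁻¹ 1} ∨ K_{ℓ⁻¹ 2} ∨ ⋯` of the complete graphs on the
fibres of `ℓ`. -/
def sequentialJoin (ℓ : V → ℕ) : SimpleGraph V where
  Adj u v := u ≠ v ∧ ℓ u ≤ ℓ v + 1 ∧ ℓ v ≤ ℓ u + 1
  symm := ⟨fun _ _ h => ⟨h.1.symm, h.2.2, h.2.1⟩⟩
  loopless := ⟨fun _ h => h.1 rfl⟩

variable {ℓ : V → ℕ}

instance [DecidableEq V] : DecidableRel (sequentialJoin ℓ).Adj :=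
  fun _ _ => inferInstanceAs (Decidable (_ ∧ _))

@[simp]
lemma sequentialJoin_adj {u v : V} :
    (sequentialJoin ℓ).Adj u v ↔ u ≠ v ∧ ℓ u ≤ ℓ v + 1 ∧ ℓ v ≤ ℓ u + 1 :=
  Iff.rfl

lemma induce_sequentialJoin (s : Set V) :
    (sequentialJoin ℓ).induce s = sequentialJoin fun v : s => ℓ v := by
  ext u v
  simp [Subtype.ext_iff]

lemma sequentialJoin_le_add_length {u v : V} (p : (sequentialJoin ℓ).Walk u v) :
    ℓ v ≤ ℓ u + p.length := by
  induction p with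
  | nil => simp
  | cons h _ ih =>
    rw [Walk.length_cons]
    have := h.2.2
    omega

lemma sequentialJoin_sub_le_edist (u v : V) :
    ((ℓ v - ℓ u : ℕ) : ℕ∞) ≤ (sequentialJoin ℓ).edist u v := by
  by_cases h : (sequentialJoin ℓ).Reachable u v
  · obtain ⟨p, hp⟩ := h.exists_walk_length_eq_edist
    rw [← hp, Nat.cast_le]
    have := sequentialJoin_le_add_length p
    omega
  · rw [edist_eq_top_of_not_reachable h]
    exact le_top

lemma sequentialJoin_edist_le_one {u v : V} (huv : ℓ u ≤ ℓ v + 1) (hvu : ℓ v ≤ ℓ u + 1) :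
    (sequentialJoin ℓ).edist u v ≤ 1 := by
  rw [edist_le_one_iff_adj_or_eq]
  by_cases h : u = v
  · exact Or.inr h
  · exact Or.inl ⟨h, huv, hvu⟩

lemma sequentialJoin_edist_le {u v : V} {m : ℕ} (huv : ℓ u ≤ ℓ v) (hm : ℓ v ≤ ℓ u + m + 1)
    (h : ∀ i, ℓ u < i → i < ℓ v → ∃ w, ℓ w = i) :
    (sequentialJoin ℓ).edist u v ≤ (m + 1 : ℕ) := by
  induction m generalizing u with
  | zero => simpa using sequentialJoin_edist_le_one (by omega) (by omega)
  | succ m ih =>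
    by_cases hnear : ℓ v ≤ ℓ u + 1
    · exact (sequentialJoin_edist_le_one (by omega) hnear).trans (by norm_num)
    obtain ⟨w, hw⟩ := h (ℓ u + 1) (by omega) (by omega)
    have huw : (sequentialJoin ℓ).edist u w ≤ 1 := sequentialJoin_edist_le_one (by omega) (by omega)
    have hwv := ih (u := w) (by omega) (by omega) fun i hi hi' => h i (by omega) hi'
    calc (sequentialJoin ℓ).edist u v
        ≤ (sequentialJoin ℓ).edist u w + (sequentialJoin ℓ).edist w v := SimpleGraph.edist_triangle
      _ ≤ 1 + (m + 1) := add_le_add huw hwv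
      _ = (m + 1 : ℕ) + 1 := by push_cast; ring

lemma sequentialJoin_connected [Nonempty V]
    (h : ∀ u v i, ℓ u < i → i < ℓ v → ∃ w, ℓ w = i) : (sequentialJoin ℓ).Connected := by
  have reach {u v : V} (huv : ℓ u ≤ ℓ v) : (sequentialJoin ℓ).Reachable u v :=
    reachable_of_edist_ne_top <| ne_top_of_le_ne_top (ENat.natCast_ne_top (ℓ v - ℓ u + 1))
      (sequentialJoin_edist_le huv (by omega) (h u v))
  refine (connected_iff _).mpr ⟨fun u v => ?_, ‹_›⟩
  rcases le_total (ℓ u) (ℓ v) with huv | hvu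
  · exact reach huv
  · exact (reach hvu).symm

lemma sequentialJoin_ediam {D : ℕ} (hD : 0 < D) (hℓ : ∀ v, ℓ v ≤ D)
    (hsurj : ∀ i ≤ D, ∃ v, ℓ v = i) : (sequentialJoin ℓ).ediam = D := by
  have upper {u v : V} (huv : ℓ u ≤ ℓ v) : (sequentialJoin ℓ).edist u v ≤ D := by
    have := sequentialJoin_edist_le (m := D - 1) huv (by have := hℓ v; omega)
      fun i _ _ => hsurj i (by have := hℓ v; omega)
    rwa [show D - 1 + 1 = D by omega] at this
  refine le_antisymm (ediam_le_of_edist_le fun u v => ?_) ?_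
  · rcases le_total (ℓ u) (ℓ v) with huv | hvu
    · exact upper huv
    · rw [edist_comm]; exact upper hvu
  · obtain ⟨u, hu⟩ := hsurj 0 (Nat.zero_le _)
    obtain ⟨v, hv⟩ := hsurj D le_rfl
    calc (D : ℕ∞) = ((ℓ v - ℓ u : ℕ) : ℕ∞) := by rw [hu, hv, Nat.sub_zero]
      _ ≤ _ := sequentialJoin_sub_le_edist u v
      _ ≤ _ := edist_le_ediam

variable [Fintype V]

lemma sequentialJoin_kConnected {k D : ℕ} (hD : 1 < D) (hℓ : ∀ v, ℓ v ≤ D)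
    (hcard : k < Fintype.card V) (hsize : ∀ i, 0 < i → i < D → k ≤ #{v | ℓ v = i}) :
    (sequentialJoin ℓ).KConnected k := by
  refine ⟨hcard, fun S hS => ?_⟩
  have survivor {i : ℕ} (hi : 0 < i) (hiD : i < D) : ∃ v : ↥Sᶜ, ℓ v = i := by
    have hlt : S.ncard < (({v | ℓ v = i} : Finset V) : Set V).ncard := by
      rw [Set.ncard_coe_finset]
      exact hS.trans_le (hsize i hi hiD)
    obtain ⟨v, hv, hvS⟩ := Set.exists_mem_notMem_of_ncard_lt_ncard hlt
    exact ⟨⟨v, hvS⟩, by simpa using hv⟩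
  have : Nonempty ↥Sᶜ := (survivor zero_lt_one hD).nonempty
  rw [induce_sequentialJoin]
  refine sequentialJoin_connected fun u v i hui hiv => survivor (by omega) ?_
  have := hℓ v
  omega

lemma sequentialJoin_degree_add_one [DecidableEq V] (v : V) :
    (sequentialJoin ℓ).degree v + 1 =
      #{w | ℓ w = ℓ v} + #{w | ℓ w = ℓ v + 1} + #{w | ℓ w + 1 = ℓ v} := by
  rw [← card_neighborFinset_eq_degree, neighborFinset_eq_filter]
  have hsplit : ({w | (sequentialJoin ℓ).Adj v w} : Finset V) =
      (({w | ℓ w = ℓ v} : Finset V).erase v ∪ ({w | ℓ w = ℓ v + 1} : Finset V)) ∪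
        ({w | ℓ w + 1 = ℓ v} : Finset V) := by
    ext w
    simp only [mem_filter, mem_univ, true_and, mem_union, mem_erase, sequentialJoin_adj]
    constructor
    · rintro ⟨hne, h₁, h₂⟩
      rcases lt_trichotomy (ℓ w) (ℓ v) with h | h | h
      · exact Or.inr (by omega)
      · exact Or.inl (Or.inl ⟨Ne.symm hne, h⟩)
      · exact Or.inl (Or.inr (by omega))
    · rintro ((⟨hne, h⟩ | h) | h)
      · exact ⟨Ne.symm hne, by omega, by omega⟩
      all_goals refine ⟨?_, by omega, by omega⟩; rintro rfl; omega
  rw [hsplit, card_union_of_disjoint, card_union_of_disjoint,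
    card_erase_of_mem (by simp)]
  · have : 0 < #({w | ℓ w = ℓ v} : Finset V) := card_pos.mpr ⟨v, by simp⟩
    omega
  all_goals
    refine Finset.disjoint_left.mpr fun w hw hw' => ?_
    simp only [mem_union, mem_erase, mem_filter, mem_univ, true_and] at hw hw'
    omega

lemma sequentialJoin_two_mul_ncard_edgeSet_add_card {D : ℕ} (hℓ : ∀ v, ℓ v ≤ D) :
    2 * (sequentialJoin ℓ).edgeSet.ncard + Fintype.card V =
      ∑ i ∈ range (D + 1), #{v | ℓ v = i} * (#{v | ℓ v = i} + 2 * #{v | ℓ v = i + 1}) := by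
  classical
  rw [← coe_edgeFinset, Set.ncard_coe_finset]
  have hdown : ∑ v, #{w | ℓ w + 1 = ℓ v} = ∑ w, #{v | ℓ v = ℓ w + 1} := by
    calc ∑ v, #{w | ℓ w + 1 = ℓ v} = ∑ w, #{v | ℓ w + 1 = ℓ v} :=
          sum_card_bipartiteAbove_eq_sum_card_bipartiteBelow _
      _ = _ := sum_congr rfl fun w _ => congrArg card (filter_congr fun v _ => eq_comm)
  calc 2 * #(sequentialJoin ℓ).edgeFinset + Fintype.card V
      = ∑ v, ((sequentialJoin ℓ).degree v + 1) := by
        rw [sum_add_distrib, sum_degrees_eq_twice_card_edges, sum_const, card_univ, smul_eq_mul,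
          mul_one]
    _ = ∑ v, (#{w | ℓ w = ℓ v} + 2 * #{w | ℓ w = ℓ v + 1}) := by
        simp only [sequentialJoin_degree_add_one, sum_add_distrib, hdown, ← mul_sum]
        omega
    _ = ∑ i ∈ range (D + 1), ∑ v with ℓ v = i, (#{w | ℓ w = ℓ v} + 2 * #{w | ℓ w = ℓ v + 1}) :=
        (sum_fiberwise_of_maps_to (fun v _ => mem_range.mpr (Nat.lt_succ_of_le (hℓ v))) _).symm
    _ = _ := by
        refine sum_congr rfl fun i _ => ?_
        rw [sum_congr rfl fun v hv => by rw [(mem_filter.mp hv).2], sum_const, smul_eq_mul]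

end SimpleGraph

variable {k d : ℕ}

lemma oreLevel_le (hk : 0 < k) (x : ℕ) : oreLevel k d x ≤ d := by
  unfold oreLevel
  split_ifs
  · exact Nat.zero_le _
  · have : (x - 1) / k < d - 1 := (Nat.div_lt_iff_lt_mul hk).mpr (by rw [mul_comm]; omega)
    omega
  · exact le_rfl

lemma oreLevel_eq_iff {x i : ℕ} (hk : 0 < k) (hx : x < k * (d - 1) + 2) (hi : 0 < i)
    (hid : i < d) : oreLevel k d x = i ↔ (i - 1) * k < x ∧ x ≤ i * k := by
  have hik : i * k ≤ k * (d - 1) := by rw [mul_comm]; exact Nat.mul_le_mul_left k (by omega)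
  have hsucc : (i - 1) * k + k = i * k := by
    rw [← Nat.succ_mul, Nat.succ_eq_add_one, Nat.sub_add_cancel hi]
  unfold oreLevel
  split_ifs
  · omega
  · rw [show (x - 1) / k + 1 = i ↔ (x - 1) / k = i - 1 by omega, Nat.div_eq_iff hk]
    omega
  · omega

lemma card_filter_oreLevel_eq (hk : 0 < k) (hd : 0 < d) (i : ℕ) :
    #{x ∈ range (k * (d - 1) + 2) | oreLevel k d x = i} =
      if i = 0 ∨ i = d then 1 else if i < d then k else 0 := by
  split_ifs with hend hmid
  · refine card_eq_one.mpr ⟨if i = 0 then 0 else k * (d - 1) + 1, ?_⟩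
    ext x
    have hdiv : 0 < x → x ≤ k * (d - 1) → (x - 1) / k < d - 1 := fun _ _ =>
      (Nat.div_lt_iff_lt_mul hk).mpr (by rw [mul_comm]; omega)
    rw [mem_filter, mem_range, mem_singleton, oreLevel]
    split_ifs <;> (try have := hdiv (by omega) (by omega)) <;>
      generalize (x - 1) / k = q at * <;> omega
  · have hik : i * k ≤ k * (d - 1) := by rw [mul_comm]; exact Nat.mul_le_mul_left k (by omega)
    have hsucc : (i - 1) * k + k = i * k := by
      rw [← Nat.succ_mul, Nat.succ_eq_add_one, Nat.sub_add_cancel (by omega)]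
    rw [show ({x ∈ range (k * (d - 1) + 2) | oreLevel k d x = i} : Finset ℕ) =
        Ioc ((i - 1) * k) (i * k) by
      ext x
      simp only [mem_filter, mem_range, mem_Ioc]
      constructor
      · rintro ⟨hx, h⟩
        exact (oreLevel_eq_iff hk hx (by omega) hmid).mp h
      · rintro h
        have hx : x < k * (d - 1) + 2 := by omega
        exact ⟨hx, (oreLevel_eq_iff hk hx (by omega) hmid).mpr h⟩, Nat.card_Ioc]
    omega
  · refine card_eq_zero.mpr (filter_eq_empty_iff.mpr fun x _ h => ?_)
    have := oreLevel_le (d := d) hk x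
    omega

def oreLevelSize (k d r i : ℕ) : ℕ :=
  (if i = 0 ∨ i = d then 1 else if i < d then k else 0) + if i = 2 then r else 0

lemma sum_oreLevelSize (hd : 4 ≤ d) (k r : ℕ) :
    ∑ i ∈ range (d + 1), oreLevelSize k d r i *
        (oreLevelSize k d r i + 2 * oreLevelSize k d r (i + 1)) =
      (2 * k + 1) + k * (3 * k + 2 * r) + (k + r) * (3 * k + r) + 3 * (d - 4) * k ^ 2 +
        k * (k + 2) + 1 := by
  obtain ⟨e, rfl⟩ : ∃ e, d = e + 4 := ⟨d - 4, by omega⟩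
  have hmid : ∀ j ∈ range e, oreLevelSize k (e + 4) r (j + 3) *
      (oreLevelSize k (e + 4) r (j + 3) + 2 * oreLevelSize k (e + 4) r (j + 3 + 1)) =
        3 * k ^ 2 := by
    intro j hj
    have := mem_range.mp hj
    simp (disch := omega) only [oreLevelSize, if_pos, if_neg]
    ring
  rw [sum_range_succ, sum_range_succ, sum_range_succ', sum_range_succ', sum_range_succ',
    sum_congr rfl hmid]
  simp (disch := omega) only [oreLevelSize, if_pos, if_neg, sum_const, card_range, smul_eq_mul,
    Nat.add_sub_cancel, true_or, or_true, if_true]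
  ring

def oreVertexLevel (k d x : ℕ) : ℕ := if x < k * (d - 1) + 2 then oreLevel k d x else 2

lemma oreVertexLevel_le (hk : 0 < k) (hd : 2 ≤ d) (x : ℕ) : oreVertexLevel k d x ≤ d := by
  unfold oreVertexLevel
  split_ifs
  · exact oreLevel_le hk x
  · exact hd

lemma oreExtremalGraph_eq_sequentialJoin (n : ℕ) :
    oreExtremalGraph k d n = SimpleGraph.sequentialJoin fun v : Fin n => oreVertexLevel k d v := by
  ext u v
  simp only [oreExtremalGraph, SimpleGraph.fromRel_adj, SimpleGraph.sequentialJoin_adj,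
    oreVertexLevel]
  refine and_congr_right fun _ => ?_
  split_ifs <;> omega

lemma card_filter_oreVertexLevel_eq (hk : 0 < k) (hd : 0 < d) (r i : ℕ) :
    #{v : Fin (k * (d - 1) + 2 + r) | oreVertexLevel k d v = i} = oreLevelSize k d r i := by
  rw [card_filter, Fin.sum_univ_eq_sum_range (fun x => if oreVertexLevel k d x = i then 1 else 0),
    sum_range_add]
  have hT : ∑ x ∈ range (k * (d - 1) + 2), (if oreVertexLevel k d x = i then 1 else 0) =
      #{x ∈ range (k * (d - 1) + 2) | oreLevel k d x = i} := by
    rw [card_filter]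
    exact sum_congr rfl fun x hx => by rw [oreVertexLevel, if_pos (mem_range.mp hx)]
  have hR : ∑ x ∈ range r, (if oreVertexLevel k d (k * (d - 1) + 2 + x) = i then 1 else 0) =
      if i = 2 then r else 0 := by
    simp [oreVertexLevel, eq_comm]
  rw [hT, hR, card_filter_oreLevel_eq hk hd, oreLevelSize]

lemma oreExtremalGraph_kConnected (hk : 0 < k) (hd : 2 ≤ d) (r : ℕ) :
    (oreExtremalGraph k d (k * (d - 1) + 2 + r)).KConnected k := by
  rw [oreExtremalGraph_eq_sequentialJoin]
  refine SimpleGraph.sequentialJoin_kConnected (D := d) (by omega)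
    (fun v => oreVertexLevel_le hk hd v) ?_ fun i hi hid => ?_
  · rw [Fintype.card_fin]
    have : k ≤ k * (d - 1) := Nat.le_mul_of_pos_right k (by omega)
    omega
  · rw [card_filter_oreVertexLevel_eq hk (by omega), oreLevelSize, if_neg (by omega), if_pos hid]
    omega

lemma oreExtremalGraph_ediam (hk : 0 < k) (hd : 2 ≤ d) (r : ℕ) :
    (oreExtremalGraph k d (k * (d - 1) + 2 + r)).ediam = d := by
  rw [oreExtremalGraph_eq_sequentialJoin]
  refine SimpleGraph.sequentialJoin_ediam (by omega) (fun v => oreVertexLevel_le hk hd v)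
    fun i hi => ?_
  have : 0 < #{v : Fin (k * (d - 1) + 2 + r) | oreVertexLevel k d v = i} := by
    rw [card_filter_oreVertexLevel_eq hk (by omega), oreLevelSize]
    split_ifs <;> omega
  obtain ⟨v, hv⟩ := card_pos.mp this
  exact ⟨v, (mem_filter.mp hv).2⟩

lemma oreExtremalGraph_two_mul_ncard_edgeSet_add (hk : 0 < k) (hd : 4 ≤ d) (r : ℕ) :
    2 * (oreExtremalGraph k d (k * (d - 1) + 2 + r)).edgeSet.ncard + (k * (d - 1) + 2 + r) =
      (2 * k + 1) + k * (3 * k + 2 * r) + (k + r) * (3 * k + r) + 3 * (d - 4) * k ^ 2 +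
        k * (k + 2) + 1 := by
  have h := SimpleGraph.sequentialJoin_two_mul_ncard_edgeSet_add_card (D := d)
    fun v : Fin (k * (d - 1) + 2 + r) => oreVertexLevel_le hk (by omega) v
  rw [Fintype.card_fin] at h
  rw [oreExtremalGraph_eq_sequentialJoin, h, ← sum_oreLevelSize hd k r]
  simp only [card_filter_oreVertexLevel_eq hk (by omega : 0 < d)]

/-- The extremal graph for Ore's theorem when `d ≥ 4` is a simple `k`-connected graph of
order `n` and diameter `d` with exactly
`((3d-5)k² + (5-d)k)/2 + C(n-kd+k-2, 2) + 3k(n-kd+k-2)` edges. -/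
theorem oreExtremalGraph_isExtremal (k d n : ℕ) (hk : 1 ≤ k) (hd : 4 ≤ d)
    (hn : k * (d - 1) + 2 ≤ n) :
    (oreExtremalGraph k d n).KConnected k ∧
    Fintype.card (Fin n) = n ∧
    (oreExtremalGraph k d n).diam = d ∧
    ((oreExtremalGraph k d n).edgeSet.ncard : ℤ) =
      ((3 * (d : ℤ) - 5) * (k : ℤ) ^ 2 + (5 - (d : ℤ)) * (k : ℤ)) / 2
        + ((n : ℤ) - k * d + k - 2) * (((n : ℤ) - k * d + k - 2) - 1) / 2
        + 3 * (k : ℤ) * ((n : ℤ) - k * d + k - 2) := by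
  obtain ⟨r, rfl⟩ := Nat.exists_eq_add_of_le hn
  refine ⟨oreExtremalGraph_kConnected hk (by omega) r, Fintype.card_fin _, ?_, ?_⟩
  · rw [SimpleGraph.diam, oreExtremalGraph_ediam hk (by omega) r, ENat.toNat_natCast]
  have hcount := oreExtremalGraph_two_mul_ncard_edgeSet_add hk hd r
  have hr : ((k * (d - 1) + 2 + r : ℕ) : ℤ) - k * d + k - 2 = r := by
    push_cast [Nat.cast_sub (by omega : 1 ≤ d)]
    ring
  zify [(by omega : 1 ≤ d), hd] at hcount
  have htwice : 2 * ((oreExtremalGraph k d (k * (d - 1) + 2 + r)).edgeSet.ncard : ℤ) =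
      ((3 * (d : ℤ) - 5) * (k : ℤ) ^ 2 + (5 - (d : ℤ)) * (k : ℤ)) + r * (r - 1) +
        2 * (3 * k * r) := by
    linear_combination hcount
  have hA : ((3 * (d : ℤ) - 5) * (k : ℤ) ^ 2 + (5 - (d : ℤ)) * (k : ℤ)) % 2 = 0 := by
    rw [show (3 * (d : ℤ) - 5) * (k : ℤ) ^ 2 + (5 - (d : ℤ)) * (k : ℤ) =
      (3 * d - 5) * (k * (k - 1)) + 2 * (d * k) by ring]
    exact Int.even_iff.mp
      (((Int.even_mul_pred_self k).mul_left _).add (even_two_mul _))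
  have hB := Int.even_iff.mp (Int.even_mul_pred_self r)
  rw [hr]
  omega
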